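/- Let σ > 0, q ∈ (0,1), α > 1, μ0 and μ1 the densities of N(0,σ²) and N(1,σ²), and z₀ = 1/2 + σ² ln(1 + 1/(q(α−1))). Then ∫_{−∞}^{z₀} μ0(z)·((1−q) + q μ1(z)/μ0(z))^α dz ≤ 1 + q²α(α−1)(exp(1/σ²) − 1). -/

import Mathlib

open Real MeasureTheory

noncomputable def gaussPdf (σ m x : ℝ) : ℝ :=
  (1 / (σ * Real.sqrt (2 * Real.pi))) * Real.exp (-(x - m) ^ 2 / (2 * σ ^ 2))

/-!
Write `ρ = μ₁ / μ₀` and `x = q (ρ - 1)`, so that the integrand is `μ₀ (1 + x) ^ α` with `x > -1`.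
Below `z₀` one has `ρ ≤ 1 + 1 / (q (α - 1))`, i.e. `(α - 1) x ≤ 1`, and in that range
`(1 + x) ^ α ≤ 1 + α x + α (α - 1) x ^ 2`. The right-hand side is nonnegative for all `x > -1`,
so its `μ₀`-integral may be taken over the whole line, where `∫ μ₀ (ρ - 1) = 0` and
`∫ μ₀ (ρ - 1) ^ 2 = exp (1 / σ ^ 2) - 1` is the `χ²`-divergence of `N(1, σ²)` from `N(0, σ²)`.
-/

section Elementary

variable {α x : ℝ}

lemma one_add_rpow_le_exp_mul {p : ℝ} (hp : 0 ≤ p) (hx : -1 < x) :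
    (1 + x) ^ p ≤ exp (p * x) := by
  calc (1 + x) ^ p ≤ exp x ^ p :=
        rpow_le_rpow (by linarith) (by linarith [add_one_le_exp x]) hp
    _ = exp (p * x) := by rw [← exp_mul, mul_comm]

lemma exp_le_one_div_one_sub_of_nonpos {t : ℝ} (ht : t ≤ 0) : exp t ≤ 1 / (1 - t) := by
  rw [le_div_iff₀ (by linarith), ← le_div_iff₀' (exp_pos t), one_div, ← exp_neg]
  linarith [add_one_le_exp (-t)]

lemma one_add_rpow_le_of_le_two (hα1 : 1 ≤ α) (hα2 : α ≤ 2) (hx : -1 < x) :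
    (1 + x) ^ α ≤ 1 + α * x + (α - 1) * x ^ 2 := by
  have hbern : (1 + x) ^ (α - 1) ≤ 1 + (α - 1) * x :=
    rpow_one_add_le_one_add_mul_self hx.le (by linarith) (by linarith)
  calc (1 + x) ^ α = (1 + x) * (1 + x) ^ (α - 1) := by
        rw [← rpow_one_add' (by linarith) (by linarith), add_sub_cancel]
    _ ≤ (1 + x) * (1 + (α - 1) * x) := by gcongr; linarith
    _ = 1 + α * x + (α - 1) * x ^ 2 := by ring

lemma one_add_sq_mul_exp_le (hα : 2 ≤ α) (hx : -1 < x) (hxα : (α - 1) * x ≤ 1) :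
    (1 + x) ^ 2 * exp ((α - 2) * x) ≤ 1 + α * x + α * (α - 1) * x ^ 2 := by
  rcases le_total x 0 with hx0 | hx0
  · have ht : (α - 2) * x ≤ 0 := mul_nonpos_of_nonneg_of_nonpos (by linarith) hx0
    calc (1 + x) ^ 2 * exp ((α - 2) * x) ≤ (1 + x) ^ 2 * (1 / (1 - (α - 2) * x)) := by
          gcongr; exact exp_le_one_div_one_sub_of_nonpos ht
      _ ≤ 1 + α * x + α * (α - 1) * x ^ 2 := by
          rw [mul_one_div, div_le_iff₀ (by linarith)]
          nlinarith [mul_nonneg (mul_nonneg (sq_nonneg x) (by linarith : (0:ℝ) ≤ α - 1))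
            (by nlinarith : 0 ≤ 1 - α * (α - 2) * x)]
  · have ht : (α - 2) * x < 2 := by nlinarith
    calc (1 + x) ^ 2 * exp ((α - 2) * x)
        ≤ (1 + x) ^ 2 * ((2 + (α - 2) * x) / (2 - (α - 2) * x)) := by
          gcongr; exact exp_le_two_add_div_two_sub (by nlinarith) ht
      _ ≤ 1 + α * x + α * (α - 1) * x ^ 2 := by
          rw [mul_div_assoc', div_le_iff₀ (by linarith)]
          -- the two sides differ by `x ^ 2 * ((α - 1) ^ 2 + 1 - (α - 2) * (α ^ 2 - α + 1) * x)`
          have hs : 0 ≤ 1 - (α - 1) * x := by linarith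
          nlinarith [mul_nonneg (mul_nonneg (sq_nonneg x) hs) (by nlinarith : 0 ≤ α * (α - 2)),
            mul_nonneg (sq_nonneg x) hs, pow_nonneg hx0 3]

lemma one_add_rpow_le (hα : 1 < α) (hx : -1 < x) (hxα : (α - 1) * x ≤ 1) :
    (1 + x) ^ α ≤ 1 + α * x + α * (α - 1) * x ^ 2 := by
  rcases le_total α 2 with hα2 | hα2
  · calc (1 + x) ^ α ≤ 1 + α * x + (α - 1) * x ^ 2 := one_add_rpow_le_of_le_two hα.le hα2 hx
      _ ≤ 1 + α * x + α * (α - 1) * x ^ 2 := by nlinarith [sq_nonneg ((α - 1) * x)]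
  · calc (1 + x) ^ α = (1 + x) ^ 2 * (1 + x) ^ (α - 2) := by
          rw [← rpow_two, ← rpow_add (by linarith), add_sub_cancel]
      _ ≤ (1 + x) ^ 2 * exp ((α - 2) * x) := by
          gcongr; exact one_add_rpow_le_exp_mul (by linarith) hx
      _ ≤ 1 + α * x + α * (α - 1) * x ^ 2 := one_add_sq_mul_exp_le hα2 hx hxα

lemma one_add_mul_add_mul_sq_nonneg (hα : 1 < α) (hx : -1 < x) :
    0 ≤ 1 + α * x + α * (α - 1) * x ^ 2 := by
  rcases le_total x 0 with hx0 | hx0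
  · exact (rpow_nonneg (by linarith) α).trans
      (one_add_rpow_le hα hx (by nlinarith))
  · have : 0 ≤ α * (α - 1) * x ^ 2 := by have := sq_nonneg x; positivity
    nlinarith

end Elementary

section Mixture

variable {q α ρ : ℝ}

lemma neg_one_lt_mul_sub_one (hq0 : 0 ≤ q) (hq1 : q < 1) (hρ : 0 < ρ) : -1 < q * (ρ - 1) := by
  nlinarith

lemma mixture_rpow_le (hq0 : 0 < q) (hq1 : q < 1) (hα : 1 < α) (hρ : 0 < ρ)
    (hρq : ρ ≤ 1 + 1 / (q * (α - 1))) :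
    (1 - q + q * ρ) ^ α ≤ 1 + α * q * (ρ - 1) + α * (α - 1) * q ^ 2 * (ρ - 1) ^ 2 := by
  have hxα : (α - 1) * (q * (ρ - 1)) ≤ 1 := by
    have : 0 < q * (α - 1) := by nlinarith
    calc (α - 1) * (q * (ρ - 1)) = q * (α - 1) * (ρ - 1) := by ring
      _ ≤ q * (α - 1) * (1 / (q * (α - 1))) := by gcongr; linarith
      _ = 1 := mul_one_div_cancel this.ne'
  rw [show 1 - q + q * ρ = 1 + q * (ρ - 1) by ring]
  convert one_add_rpow_le hα (neg_one_lt_mul_sub_one hq0.le hq1 hρ) hxα using 1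
  ring

lemma mixture_quadratic_nonneg (hq0 : 0 ≤ q) (hq1 : q < 1) (hα : 1 < α) (hρ : 0 < ρ) :
    0 ≤ 1 + α * q * (ρ - 1) + α * (α - 1) * q ^ 2 * (ρ - 1) ^ 2 := by
  convert one_add_mul_add_mul_sq_nonneg hα (neg_one_lt_mul_sub_one hq0 hq1 hρ) using 1
  ring

end Mixture

section Gaussian

variable {σ : ℝ}

lemma gaussPdf_pos (hσ : 0 < σ) (m x : ℝ) : 0 < gaussPdf σ m x := by
  unfold gaussPdf
  have := pi_pos
  positivity

lemma gaussPdf_eq_gaussianPDFReal (hσ : 0 ≤ σ) (m : ℝ) :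
    gaussPdf σ m = ProbabilityTheory.gaussianPDFReal m (σ ^ 2).toNNReal := by
  ext x
  rw [gaussPdf, ProbabilityTheory.gaussianPDFReal, Real.coe_toNNReal _ (sq_nonneg σ), one_div,
    sqrt_mul' _ (sq_nonneg σ), sqrt_sq hσ, mul_comm σ]

lemma integrable_gaussPdf (hσ : 0 ≤ σ) (m : ℝ) : Integrable (gaussPdf σ m) := by
  rw [gaussPdf_eq_gaussianPDFReal hσ]
  exact ProbabilityTheory.integrable_gaussianPDFReal m _

lemma integral_gaussPdf (hσ : 0 < σ) (m : ℝ) : ∫ x, gaussPdf σ m x = 1 := by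
  rw [gaussPdf_eq_gaussianPDFReal hσ.le]
  exact ProbabilityTheory.integral_gaussianPDFReal_eq_one m (by positivity)

lemma gaussPdf_zero_mul_exp (t z : ℝ) :
    gaussPdf σ 0 z * exp ((2 * t * z - t ^ 2) / (2 * σ ^ 2)) = gaussPdf σ t z := by
  rw [gaussPdf, gaussPdf, mul_assoc, ← exp_add, ← add_div]
  ring_nf

lemma gaussPdf_one_div_gaussPdf_zero (hσ : 0 < σ) (z : ℝ) :
    gaussPdf σ 1 z / gaussPdf σ 0 z = exp ((2 * z - 1) / (2 * σ ^ 2)) := by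
  rw [← gaussPdf_zero_mul_exp, mul_div_cancel_left₀ _ (gaussPdf_pos hσ 0 z).ne']
  norm_num

lemma gaussPdf_one_div_gaussPdf_zero_le {R z : ℝ} (hσ : 0 < σ) (hR : 0 < R)
    (hz : z ≤ 1 / 2 + σ ^ 2 * log R) : gaussPdf σ 1 z / gaussPdf σ 0 z ≤ R := by
  rw [gaussPdf_one_div_gaussPdf_zero hσ, ← le_log_iff_exp_le hR,
    div_le_iff₀ (by positivity)]
  linarith

lemma gaussPdf_zero_mul_ratio_sq (hσ : 0 < σ) (z : ℝ) :
    gaussPdf σ 0 z * (gaussPdf σ 1 z / gaussPdf σ 0 z) ^ 2 =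
      exp (1 / σ ^ 2) * gaussPdf σ 2 z := by
  rw [gaussPdf_one_div_gaussPdf_zero hσ, ← gaussPdf_zero_mul_exp 2, mul_left_comm, ← exp_add,
    ← exp_nat_mul]
  congr 2
  field_simp
  ring

lemma gaussPdf_zero_mul_quadratic_ratio_eq (hσ : 0 < σ) (a b c : ℝ) :
    (fun z ↦ gaussPdf σ 0 z * (a + b * (gaussPdf σ 1 z / gaussPdf σ 0 z - 1)
        + c * (gaussPdf σ 1 z / gaussPdf σ 0 z - 1) ^ 2)) =
      fun z ↦ (a - b + c) * gaussPdf σ 0 z + (b - 2 * c) * gaussPdf σ 1 z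
        + c * exp (1 / σ ^ 2) * gaussPdf σ 2 z := by
  ext z
  have hρ : gaussPdf σ 0 z * (gaussPdf σ 1 z / gaussPdf σ 0 z) = gaussPdf σ 1 z :=
    mul_div_cancel₀ _ (gaussPdf_pos hσ 0 z).ne'
  linear_combination (b - 2 * c) * hρ + c * gaussPdf_zero_mul_ratio_sq hσ z

lemma integrable_gaussPdf_zero_mul_quadratic_ratio (hσ : 0 < σ) (a b c : ℝ) :
    Integrable fun z ↦ gaussPdf σ 0 z * (a + b * (gaussPdf σ 1 z / gaussPdf σ 0 z - 1)
        + c * (gaussPdf σ 1 z / gaussPdf σ 0 z - 1) ^ 2) := by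
  rw [gaussPdf_zero_mul_quadratic_ratio_eq hσ]
  exact (((integrable_gaussPdf hσ.le 0).const_mul _).add
    ((integrable_gaussPdf hσ.le 1).const_mul _)).add ((integrable_gaussPdf hσ.le 2).const_mul _)

lemma integral_gaussPdf_zero_mul_quadratic_ratio (hσ : 0 < σ) (a b c : ℝ) :
    ∫ z, gaussPdf σ 0 z * (a + b * (gaussPdf σ 1 z / gaussPdf σ 0 z - 1)
        + c * (gaussPdf σ 1 z / gaussPdf σ 0 z - 1) ^ 2) = a + c * (exp (1 / σ ^ 2) - 1) := by
  have h0 := (integrable_gaussPdf hσ.le 0).const_mul (a - b + c)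
  have h1 := (integrable_gaussPdf hσ.le 1).const_mul (b - 2 * c)
  have h2 := (integrable_gaussPdf hσ.le 2).const_mul (c * exp (1 / σ ^ 2))
  rw [gaussPdf_zero_mul_quadratic_ratio_eq hσ, integral_add (f := fun z ↦ _ + _) (h0.add h1) h2,
    integral_add h0 h1, integral_const_mul, integral_const_mul, integral_const_mul,
    integral_gaussPdf hσ, integral_gaussPdf hσ, integral_gaussPdf hσ]
  ring

end Gaussian

theorem A_alpha_one_bound (σ q α : ℝ) (hσ : 0 < σ) (hq0 : 0 < q) (hq1 : q < 1)
    (hα : 1 < α) :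
    ∫ z in Set.Iio ((1 : ℝ) / 2 + σ ^ 2 * Real.log (1 + 1 / (q * (α - 1)))),
        gaussPdf σ 0 z * ((1 - q) + q * (gaussPdf σ 1 z / gaussPdf σ 0 z)) ^ α ≤
      1 + q ^ 2 * α * (α - 1) * (Real.exp (1 / σ ^ 2) - 1) := by
  set z₀ := (1 : ℝ) / 2 + σ ^ 2 * Real.log (1 + 1 / (q * (α - 1)))
  set ρ := fun z ↦ gaussPdf σ 1 z / gaussPdf σ 0 z
  have hρ : ∀ z, 0 < ρ z := fun z ↦ div_pos (gaussPdf_pos hσ 1 z) (gaussPdf_pos hσ 0 z)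
  have hint := integrable_gaussPdf_zero_mul_quadratic_ratio hσ 1 (α * q) (α * (α - 1) * q ^ 2)
  calc _ ≤ ∫ z in Set.Iio z₀,
          gaussPdf σ 0 z * (1 + α * q * (ρ z - 1) + α * (α - 1) * q ^ 2 * (ρ z - 1) ^ 2) := by
        refine integral_mono_of_nonneg (ae_of_all _ fun z ↦ ?_) hint.integrableOn
          (ae_restrict_of_forall_mem measurableSet_Iio fun z hz ↦ ?_)
        · exact mul_nonneg (gaussPdf_pos hσ 0 z).le
            (rpow_nonneg (by nlinarith [hρ z]) α)
        · exact mul_le_mul_of_nonneg_left (mixture_rpow_le hq0 hq1 hα (hρ z)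
            (gaussPdf_one_div_gaussPdf_zero_le hσ (by positivity) (le_of_lt hz)))
            (gaussPdf_pos hσ 0 z).le
    _ ≤ ∫ z, gaussPdf σ 0 z * (1 + α * q * (ρ z - 1) + α * (α - 1) * q ^ 2 * (ρ z - 1) ^ 2) :=
        setIntegral_le_integral hint (ae_of_all _ fun z ↦ mul_nonneg (gaussPdf_pos hσ 0 z).le
          (mixture_quadratic_nonneg hq0.le hq1 hα (hρ z)))
    _ = 1 + q ^ 2 * α * (α - 1) * (Real.exp (1 / σ ^ 2) - 1) := by
        rw [integral_gaussPdf_zero_mul_quadratic_ratio hσ]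
        ring
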